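/- For an infinite set X ⊆ ω, the function d_X on ω×ω defined by d_X(x,y) = 0 if x = y, d_X(x,y) = |2^{−x} − 2^{−y}| if x ≠ y and both x, y ∈ X, and d_X(x,y) = 1 otherwise, is a metric on ω, and for B ⊆ ω one has inf{d_X(b, c) : b ∈ B, c ∈ ω∖B} > 0 if and only if X∖B is finite or X∩B is finite. -/

import Mathlib

/-- `d` is a metric on `α`. -/
def IsMetricOn {α : Type*} (d : α → α → ℝ) : Prop :=
  (∀ x y, d x y = 0 ↔ x = y) ∧ (∀ x y, d x y = d y x) ∧
    ∀ x y z, d x z ≤ d x y + d y z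

open Classical in
/-- The metric `d_X` associated to `X ⊆ ω`. -/
noncomputable def dX (X : Set ℕ) (x y : ℕ) : ℝ :=
  if x = y then 0
  else if x ∈ X ∧ y ∈ X then |(2:ℝ) ^ (-(x:ℤ)) - (2:ℝ) ^ (-(y:ℤ))|
  else 1

/-!
Write `t n = 2⁻ⁿ`. Two points are at distance at least `t (N + 1)` as soon as one of them is
outside `X` or the smaller one is at most `N`, and two points of `X` beyond `N` are at distance
at most `t N`. So `B` is separated from its complement iff the points of `X` on one of the two
sides are bounded, i.e. iff `X ∖ B` or `X ∩ B` is finite. The metric axioms hold because all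
distances lie in `[0, 1]` and the only nontrivial triangles lie inside `X`, where `d_X` is the
pull-back of the distance of `ℝ` along the injective map `t`.
-/

lemma abs_inv_two_pow_sub_le (m n : ℕ) : |(2⁻¹ : ℝ) ^ m - 2⁻¹ ^ n| ≤ 2⁻¹ ^ min m n :=
  abs_sub_le_of_nonneg_of_le (by positivity)
    (pow_le_pow_of_le_one (by norm_num) (by norm_num) (min_le_left m n)) (by positivity)
    (pow_le_pow_of_le_one (by norm_num) (by norm_num) (min_le_right m n))

lemma inv_two_pow_succ_le_abs_sub {m n : ℕ} (h : m ≠ n) :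
    (2⁻¹ : ℝ) ^ (min m n + 1) ≤ |2⁻¹ ^ m - 2⁻¹ ^ n| := by
  wlog hmn : m < n generalizing m n
  · simpa [min_comm, abs_sub_comm] using this h.symm (by omega)
  have hn : (2⁻¹ : ℝ) ^ n ≤ 2⁻¹ ^ (m + 1) :=
    pow_le_pow_of_le_one (by norm_num) (by norm_num) hmn
  have hm : (2⁻¹ : ℝ) ^ m = 2 * 2⁻¹ ^ (m + 1) := by ring
  have hpos : (0 : ℝ) < 2⁻¹ ^ (m + 1) := by positivity
  rw [min_eq_left hmn.le, abs_of_pos (by linarith)]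
  linarith

section dX

variable {X : Set ℕ} {x y : ℕ}

lemma dX_self (X : Set ℕ) (x : ℕ) : dX X x x = 0 := if_pos rfl

lemma dX_of_mem (hx : x ∈ X) (hy : y ∈ X) : dX X x y = |2⁻¹ ^ x - 2⁻¹ ^ y| := by
  rcases eq_or_ne x y with rfl | hxy
  · simp [dX_self]
  · simp [dX, hxy, hx, hy]

lemma dX_of_notMem (hxy : x ≠ y) (h : ¬(x ∈ X ∧ y ∈ X)) : dX X x y = 1 := by
  simp only [dX, if_neg hxy, if_neg h]

lemma dX_comm (X : Set ℕ) (x y : ℕ) : dX X x y = dX X y x := by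
  rcases eq_or_ne x y with rfl | hxy
  · rfl
  by_cases h : x ∈ X ∧ y ∈ X
  · rw [dX_of_mem h.1 h.2, dX_of_mem h.2 h.1, abs_sub_comm]
  · rw [dX_of_notMem hxy h, dX_of_notMem hxy.symm (fun h' => h h'.symm)]

lemma dX_nonneg (X : Set ℕ) (x y : ℕ) : 0 ≤ dX X x y := by
  unfold dX
  split_ifs <;> positivity

lemma dX_le_one (X : Set ℕ) (x y : ℕ) : dX X x y ≤ 1 := by
  by_cases h : x ∈ X ∧ y ∈ X
  · rw [dX_of_mem h.1 h.2]
    exact (abs_inv_two_pow_sub_le x y).trans (pow_le_one₀ (by norm_num) (by norm_num))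
  · rcases eq_or_ne x y with rfl | hxy
    · rw [dX_self]; exact zero_le_one
    · rw [dX_of_notMem hxy h]

lemma dX_le_of_mem (hx : x ∈ X) (hy : y ∈ X) : dX X x y ≤ 2⁻¹ ^ min x y :=
  dX_of_mem hx hy ▸ abs_inv_two_pow_sub_le x y

lemma inv_two_pow_succ_le_dX {N : ℕ} (hxy : x ≠ y) (hN : x ∈ X → y ∈ X → min x y ≤ N) :
    (2⁻¹ : ℝ) ^ (N + 1) ≤ dX X x y := by
  by_cases h : x ∈ X ∧ y ∈ X
  · rw [dX_of_mem h.1 h.2]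
    exact (pow_le_pow_of_le_one (by norm_num) (by norm_num) (by have := hN h.1 h.2; omega)).trans
      (inv_two_pow_succ_le_abs_sub hxy)
  · rw [dX_of_notMem hxy h]
    exact pow_le_one₀ (by norm_num) (by norm_num)

lemma dX_pos (hxy : x ≠ y) : 0 < dX X x y :=
  (pow_pos (by norm_num) _).trans_le (inv_two_pow_succ_le_dX (N := min x y) hxy fun _ _ => le_rfl)

lemma dX_eq_zero_iff : dX X x y = 0 ↔ x = y :=
  ⟨fun h => by_contra fun hxy => (dX_pos hxy).ne' h, fun h => h ▸ dX_self X x⟩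

lemma one_le_dX_add_dX {z : ℕ} (hxy : x ≠ y) (hyz : y ≠ z) (h : ¬(x ∈ X ∧ y ∈ X ∧ z ∈ X)) :
    1 ≤ dX X x y + dX X y z := by
  by_cases hxy' : x ∈ X ∧ y ∈ X
  · rw [dX_of_notMem hyz (by tauto)]
    linarith [dX_nonneg X x y]
  · rw [dX_of_notMem hxy hxy']
    linarith [dX_nonneg X y z]

lemma dX_triangle (X : Set ℕ) (x y z : ℕ) : dX X x z ≤ dX X x y + dX X y z := by
  rcases eq_or_ne x y with rfl | hxy
  · rw [dX_self, zero_add]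
  rcases eq_or_ne y z with rfl | hyz
  · rw [dX_self, add_zero]
  by_cases h : x ∈ X ∧ y ∈ X ∧ z ∈ X
  · obtain ⟨hx, hy, hz⟩ := h
    rw [dX_of_mem hx hz, dX_of_mem hx hy, dX_of_mem hy hz]
    exact abs_sub_le _ _ _
  · linarith [dX_le_one X x z, one_le_dX_add_dX hxy hyz h]

lemma isMetricOn_dX (X : Set ℕ) : IsMetricOn (dX X) :=
  ⟨fun _ _ => dX_eq_zero_iff, dX_comm X, dX_triangle X⟩

lemma finite_or_finite_of_dX_separated {B : Set ℕ}
    (h : ∃ ε > (0 : ℝ), ∀ b ∈ B, ∀ c ∉ B, ε ≤ dX X b c) : (X \ B).Finite ∨ (X ∩ B).Finite := by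
  obtain ⟨ε, hε, hsep⟩ := h
  by_contra! hinf
  obtain ⟨n, hn⟩ := exists_pow_lt_of_lt_one hε (by norm_num : (2⁻¹ : ℝ) < 1)
  obtain ⟨b, ⟨hbX, hbB⟩, hbn⟩ := hinf.2.exists_gt n
  obtain ⟨c, ⟨hcX, hcB⟩, hcn⟩ := hinf.1.exists_gt n
  have hclose : dX X b c ≤ 2⁻¹ ^ n :=
    (dX_le_of_mem hbX hcX).trans (pow_le_pow_of_le_one (by norm_num) (by norm_num) (by omega))
  linarith [hsep b hbB c hcB]

lemma dX_separated_of_finite {B : Set ℕ} (h : (X \ B).Finite ∨ (X ∩ B).Finite) :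
    ∃ ε > (0 : ℝ), ∀ b ∈ B, ∀ c ∉ B, ε ≤ dX X b c := by
  suffices ∃ N, ∀ b ∈ B, ∀ c ∉ B, b ∈ X → c ∈ X → min b c ≤ N by
    obtain ⟨N, hN⟩ := this
    exact ⟨2⁻¹ ^ (N + 1), by positivity, fun b hb c hc =>
      inv_two_pow_succ_le_dX (fun hbc => hc (hbc ▸ hb)) (hN b hb c hc)⟩
  rcases h with hfin | hfin <;> obtain ⟨N, hN⟩ := hfin.bddAbove
  · exact ⟨N, fun b _ c hc _ hcX => (min_le_right b c).trans (hN ⟨hcX, hc⟩)⟩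
  · exact ⟨N, fun b hb c _ hbX _ => (min_le_left b c).trans (hN ⟨hbX, hb⟩)⟩

end dX

theorem stmt12_general (X : Set ℕ) :
    IsMetricOn (dX X) ∧
    ∀ B : Set ℕ,
      ((∃ ε > (0:ℝ), ∀ b ∈ B, ∀ c ∉ B, ε ≤ dX X b c) ↔
        (X \ B).Finite ∨ (X ∩ B).Finite) :=
  ⟨isMetricOn_dX X, fun _ => ⟨finite_or_finite_of_dX_separated, dX_separated_of_finite⟩⟩

/-- For infinite `X ⊆ ω`, `d_X` is a metric on `ω`, and for
`B ⊆ ω`, `d_X(B, ω∖B) > 0` iff `X∖B` is finite or `X∩B` is finite. -/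
theorem stmt12 (X : Set ℕ) (hX : X.Infinite) :
    IsMetricOn (dX X) ∧
    ∀ B : Set ℕ,
      ((∃ ε > (0:ℝ), ∀ b ∈ B, ∀ c ∉ B, ε ≤ dX X b c) ↔
        (X \ B).Finite ∨ (X ∩ B).Finite) :=
  stmt12_general X
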